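/- In the kernel ANF of the computational lambda-calculus, for all kernel terms M and P, the λC-term (let y:=M in P) reduces by a sequence of assoc-steps to the generalized let-expression LET y:=M in P, where LET is defined by recursion on M. -/

import Mathlib

namespace Paper

/-- Terms of the computational lambda-calculus λC. -/
inductive Tm : Type
| var : String → Tm
| lam : String → Tm → Tm
| app : Tm → Tm → Tm
| lett : String → Tm → Tm → Tm

namespace Tm

def IsValue : Tm → Prop
| var _ => True
| lam _ _ => True
| _ => False

def FV : Tm → Finset String
| var x => {x}
| lam x m => FV m \ {x}
| app m n => FV m ∪ FV n
| lett x m n => FV m ∪ (FV n \ {x})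

/-- Substitution of a term (in practice, a value) for a variable. -/
def subst (v : Tm) (x : String) : Tm → Tm
| var y => if y = x then v else var y
| lam y m => if y = x then lam y m else lam y (subst v x m)
| app m n => app (subst v x m) (subst v x n)
| lett y m n => lett y (subst v x m) (if y = x then n else subst v x n)

/-- Names of the reduction rules of λC. -/
inductive Rule | B | letv | etalet | assoc | let1 | let2 | betav

/-- One-step reduction of λC, tagged by the rule used, closed under all contexts. -/
inductive Step : Rule → Tm → Tm → Prop
| B {x M N} : Step .B (app (lam x M) N) (lett x N M)
| letv {x V M} : IsValue V → Step .letv (lett x V M) (subst V x M)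
| etalet {x M} : Step .etalet (lett x M (var x)) M
| assoc {x y M N P} : Step .assoc (lett y (lett x M N) P) (lett x M (lett y N P))
| let1 {x M N} : ¬ IsValue M → x ∉ FV M → x ∉ FV N →
    Step .let1 (app M N) (lett x M (app (var x) N))
| let2 {x V N} : IsValue V → ¬ IsValue N → x ∉ FV V →
    Step .let2 (app V N) (lett x N (app V (var x)))
| betav {x M V} : IsValue V → Step .betav (app (lam x M) V) (subst V x M)
| appL {r M M' N} : Step r M M' → Step r (app M N) (app M' N)
| appR {r M N N'} : Step r N N' → Step r (app M N) (app M N')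
| lamC {r x M M'} : Step r M M' → Step r (lam x M) (lam x M')
| lettL {r x M M' N} : Step r M M' → Step r (lett x M N) (lett x M' N)
| lettR {r x M N N'} : Step r N N' → Step r (lett x M N) (lett x M N')

end Tm

mutual
/-- Values of the kernel ANF. -/
inductive ANFv : Tm → Prop
| var {x} : ANFv (.var x)
| lam {x M} : ANF M → ANFv (.lam x M)
/-- Terms of the kernel ANF of λC. -/
inductive ANF : Tm → Prop
| val {V} : ANFv V → ANF V
| app {V W} : ANFv V → ANFv W → ANF (.app V W)
| lettV {x V M} : ANFv V → ANF M → ANF (.lett x V M)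
| lettA {x V W M} : ANFv V → ANFv W → ANF M → ANF (.lett x (.app V W) M)
end

/-- The generalized let-expression `LET y := M in P`, defined by recursion on M. -/
def LETk (y : String) : Tm → Tm → Tm
| .lett x a n, P => .lett x a (LETk y n P)
| M, P => .lett y M P

theorem Tm.Step.reflTransGen_lettR {r : Tm.Rule} {x : String} {M N N' : Tm}
    (h : Relation.ReflTransGen (Tm.Step r) N N') :
    Relation.ReflTransGen (Tm.Step r) (.lett x M N) (.lett x M N') :=
  h.lift (Tm.lett x M) fun _ _ => Tm.Step.lettR

theorem lett_reflTransGen_assoc_LETk (y : String) (M P : Tm) :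
    Relation.ReflTransGen (Tm.Step .assoc) (.lett y M P) (LETk y M P) := by
  induction M generalizing P with
  | lett x a n _ ih => exact .head .assoc (Tm.Step.reflTransGen_lettR (ih P))
  | _ => exact .refl

/-- for kernel (ANF) terms M and P, `let y := M in P` reduces by a
sequence of assoc-steps to the generalized let `LET y := M in P`. -/
theorem stmt1 (y : String) (M P : Tm) (hM : ANF M) (hP : ANF P) :
    Relation.ReflTransGen (Tm.Step .assoc) (.lett y M P) (LETk y M P) :=
  lett_reflTransGen_assoc_LETk y M P

end Paper
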